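/- arXiv:1011.0048 — 2 statements merged into one kernel-verified Lean document; each statement's English description precedes it below -/
import Mathlib

section
/- Every algebra automorphism of the Cayley–Dickson doubling of the quaternions preserves the norm N(a,b) = |a|² + |b|², i.e., N(α(x)) = N(x) for all x. -/
/-!
Every `x = (a, b)` satisfies `x² = 2 (re a) x - N(x) · 1`, and an automorphism `α` fixes the
identity `1 = (1, 0)`, so `α x` satisfies the same relation with the coefficients of `x`. Real
multiples of `1` are fixed by `α`; for any other `x`, the vectors `1` and `α x` are linearly
independent, so the coefficients of a quadratic relation for `α x` are unique and `N(α x) = N(x)`.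
-/

/-- Cayley–Dickson doubling of the quaternions: multiplication on ℍ × ℍ. -/
noncomputable def omul (x y : Quaternion ℝ × Quaternion ℝ) : Quaternion ℝ × Quaternion ℝ :=
  (x.1 * y.1 - star y.2 * x.2, x.2 * star y.1 + y.2 * x.1)

/-- The map γ(a,b) = (a,-b). -/
def gam (x : Quaternion ℝ × Quaternion ℝ) : Quaternion ℝ × Quaternion ℝ := (x.1, -x.2)

/-- Conjugation on the doubling. -/
def oconj (x : Quaternion ℝ × Quaternion ℝ) : Quaternion ℝ × Quaternion ℝ := (star x.1, -x.2)

/-- The norm N(a,b) = |a|² + |b|². -/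
noncomputable def oN (x : Quaternion ℝ × Quaternion ℝ) : ℝ := ‖x.1‖^2 + ‖x.2‖^2

noncomputable abbrev oone : Quaternion ℝ × Quaternion ℝ := (1, 0)

lemma omul_oone_left (y : Quaternion ℝ × Quaternion ℝ) : omul oone y = y := by
  simp [omul]

lemma omul_oone_right (y : Quaternion ℝ × Quaternion ℝ) : omul y oone = y := by
  simp [omul]

lemma omul_self (x : Quaternion ℝ × Quaternion ℝ) :
    omul x x = (2 * x.1.re) • x - oN x • oone := by
  have hsq (q : Quaternion ℝ) : ‖q‖ ^ 2 = Quaternion.normSq q := by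
    rw [sq, Quaternion.normSq_eq_norm_mul_self]
  ext <;>
    simp [omul, oN, hsq, Quaternion.normSq_def', Quaternion.re_one, Quaternion.imI_one,
      Quaternion.imJ_one, Quaternion.imK_one] <;> ring

lemma map_identity_of_surjective {M : Type*} (mul : M → M → M) {e : M}
    (he_left : ∀ y, mul e y = y) (he_right : ∀ y, mul y e = y) {f : M → M}
    (hf : Function.Surjective f) (hmul : ∀ x y, f (mul x y) = mul (f x) (f y)) : f e = e := by
  obtain ⟨z, rfl⟩ := hf e
  calc f (f z) = mul (f (f z)) (f z) := (he_right _).symm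
    _ = f (mul (f z) z) := (hmul _ _).symm
    _ = f z := by rw [he_left]

lemma oN_eq_of_omul_self_eq {y : Quaternion ℝ × Quaternion ℝ} (hy : ∀ c : ℝ, c • oone ≠ y)
    {s n : ℝ} (h : omul y y = s • y - n • oone) : n = oN y := by
  have hind : LinearIndependent ℝ ![oone, y] :=
    (LinearIndependent.pair_iff' (by simp)).mpr hy
  have hcoeff : (-n) • oone + s • y = (-oN y) • oone + (2 * y.1.re) • y := by
    rw [neg_smul, neg_smul, neg_add_eq_sub, neg_add_eq_sub, ← h, omul_self]
  simpa using (hind.eq_of_pair hcoeff).1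

/-- Every algebra automorphism of the doubling preserves the norm N. -/
theorem stmt11 : ∀ α : (Quaternion ℝ × Quaternion ℝ) ≃ₗ[ℝ] (Quaternion ℝ × Quaternion ℝ),
    (∀ x y, α (omul x y) = omul (α x) (α y)) →
    ∀ x, oN (α x) = oN x := by
  intro α hmul x
  have hα_one : α oone = oone :=
    map_identity_of_surjective omul omul_oone_left omul_oone_right α.surjective hmul
  by_cases hx : ∃ c : ℝ, c • oone = x
  · obtain ⟨c, rfl⟩ := hx
    rw [map_smul, hα_one]
  · have hαx : ∀ c : ℝ, c • oone ≠ α x := fun c hc ↦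
      hx ⟨c, α.injective (by rw [map_smul, hα_one, hc])⟩
    refine (oN_eq_of_omul_self_eq hαx (s := 2 * x.1.re) ?_).symm
    rw [← hmul, omul_self, map_sub, map_smul, map_smul, hα_one]
end

section
/- The fixed-point set of the automorphism γ₁(a,m) = (conj(a), conj(m)) of the algebra ℂ ⊕ ℂ³ is ℝ ⊕ ℝ³, and with the induced multiplication (a,m)(b,n) = (ab - ⟨m,n⟩, a·n + b·m - m × n) it is a 4-dimensional real algebra isomorphic to the quaternions. -/
/-- The octonion-type multiplication on ℂ × ℂ³. -/
noncomputable def cmul (x y : ℂ × (Fin 3 → ℂ)) : ℂ × (Fin 3 → ℂ) :=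
  (x.1 * y.1 - ∑ i, x.2 i * star (y.2 i),
   x.1 • y.2 + (star y.1) • x.2 - fun i => star (crossProduct x.2 y.2 i))

/-- The map γ₁(a,m) = (conj a, conj m). -/
def gam1 (x : ℂ × (Fin 3 → ℂ)) : ℂ × (Fin 3 → ℂ) := (star x.1, fun i => star (x.2 i))

/-- The norm N(a,m) = |a|² + Σ |mᵢ|². -/
noncomputable def cN (x : ℂ × (Fin 3 → ℂ)) : ℝ := ‖x.1‖^2 + ∑ i, ‖x.2 i‖^2

/-- The real multiplication induced on ℝ ⊕ ℝ³: (a,m)(b,n) = (ab - m⬝n, a·n + b·m - m×n). -/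
noncomputable def rmul (x y : ℝ × (Fin 3 → ℝ)) : ℝ × (Fin 3 → ℝ) :=
  (x.1 * y.1 - ∑ i, x.2 i * y.2 i,
   x.1 • y.2 + y.1 • x.2 - crossProduct x.2 y.2)

/-- The inclusion of ℝ ⊕ ℝ³ into ℂ ⊕ ℂ³. -/
def incl (x : ℝ × (Fin 3 → ℝ)) : ℂ × (Fin 3 → ℂ) := ((x.1 : ℂ), fun i => (x.2 i : ℂ))

open scoped Matrix Quaternion

theorem crossProduct_map {R S : Type*} [CommRing R] [CommRing S] (f : R →+* S)
    (u v : Fin 3 → R) : (fun i => f (u i)) ⨯₃ (fun i => f (v i)) = fun i => f ((u ⨯₃ v) i) := by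
  ext i
  fin_cases i <;> simp [cross_apply]

theorem gam1_eq_self_iff (x : ℂ × (Fin 3 → ℂ)) : gam1 x = x ↔ ∃ y, x = incl y := by
  constructor
  · intro h
    refine ⟨(x.1.re, fun i => (x.2 i).re), Prod.ext ?_ (funext fun i => ?_)⟩
    · exact (Complex.conj_eq_iff_re.mp (congrArg Prod.fst h)).symm
    · exact (Complex.conj_eq_iff_re.mp (congrFun (congrArg Prod.snd h) i)).symm
  · rintro ⟨y, rfl⟩
    simp [gam1, incl]

theorem cmul_incl (y z : ℝ × (Fin 3 → ℝ)) : cmul (incl y) (incl z) = incl (rmul y z) := by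
  have hcross := crossProduct_map Complex.ofRealHom y.2 z.2
  simp only [Complex.ofRealHom_eq_coe] at hcross
  ext i
  · simp [cmul, rmul, incl]
  · simp [cmul, rmul, incl, hcross]

/-- In ℍ, `(a + m) * (b + n) = (a * b - m ⬝ᵥ n) + (a • n + b • m + m ⨯₃ n)`; negating the vector
part turns its `+ m ⨯₃ n` into the `- m ⨯₃ n` of `rmul`. -/
noncomputable def toQuaternion : (ℝ × (Fin 3 → ℝ)) ≃ₗ[ℝ] ℍ[ℝ] where
  toFun x := ⟨x.1, -x.2 0, -x.2 1, -x.2 2⟩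
  invFun q := (q.re, ![-q.imI, -q.imJ, -q.imK])
  map_add' x y := Quaternion.ext _ _ rfl (neg_add _ _) (neg_add _ _) (neg_add _ _)
  map_smul' c x :=
    Quaternion.ext _ _ rfl (mul_neg _ _).symm (mul_neg _ _).symm (mul_neg _ _).symm
  left_inv x := by
    ext i
    · rfl
    · fin_cases i <;> simp
  right_inv q := by ext <;> simp

section

variable (x : ℝ × (Fin 3 → ℝ))

@[simp] theorem toQuaternion_re : (toQuaternion x).re = x.1 := rfl
@[simp] theorem toQuaternion_imI : (toQuaternion x).imI = -x.2 0 := rfl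
@[simp] theorem toQuaternion_imJ : (toQuaternion x).imJ = -x.2 1 := rfl
@[simp] theorem toQuaternion_imK : (toQuaternion x).imK = -x.2 2 := rfl

end

theorem toQuaternion_one : toQuaternion (1, 0) = 1 := by
  ext <;> simp

theorem toQuaternion_rmul (y z : ℝ × (Fin 3 → ℝ)) :
    toQuaternion (rmul y z) = toQuaternion y * toQuaternion z := by
  ext <;>
    simp [rmul, Fin.sum_univ_three, cross_apply, Matrix.vecHead, Matrix.vecTail] <;> ring

/-- The fixed-point set of γ₁ is ℝ ⊕ ℝ³, the induced multiplication is rmul,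
and (ℝ ⊕ ℝ³, rmul) is a 4-dimensional real algebra isomorphic to the quaternions. -/
theorem stmt13 :
    (∀ x : ℂ × (Fin 3 → ℂ), gam1 x = x ↔ ∃ y : ℝ × (Fin 3 → ℝ), x = incl y) ∧
    (∀ y z : ℝ × (Fin 3 → ℝ), cmul (incl y) (incl z) = incl (rmul y z)) ∧
    Module.finrank ℝ (ℝ × (Fin 3 → ℝ)) = 4 ∧
    ∃ e : (ℝ × (Fin 3 → ℝ)) ≃ₗ[ℝ] Quaternion ℝ,
      e ((1 : ℝ), (0 : Fin 3 → ℝ)) = 1 ∧ ∀ y z, e (rmul y z) = e y * e z :=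
  ⟨gam1_eq_self_iff, cmul_incl, by simp,
    toQuaternion, toQuaternion_one, toQuaternion_rmul⟩
end
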